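/- For every finite-dimensional normed space X and any two norms P, Q on X, the distance ∂_{X,𝔾}(P,Q) equals α_X(P,Q), where α_X(P,Q) is the Hausdorff distance (with respect to the norm N* dual to the norm N of X) between the unit balls of the dual norms P* and Q* on X*. -/

import Mathlib

/-- `N` is a norm on the real vector space `V`. -/
def IsNormOn {V : Type} [AddCommGroup V] [Module ℝ V] (N : V → ℝ) : Prop :=
  (∀ x, 0 ≤ N x) ∧ (∀ x, N x = 0 → x = 0) ∧
    (∀ (a : ℝ) (x : V), N (a • x) = |a| * N x) ∧
    ∀ x y, N (x + y) ≤ N x + N y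

/-- Hausdorff distance between subsets of `V` with respect to the gauge `N₀`. -/
noncomputable def hausdorffWrt {V : Type*} [AddCommGroup V]
    (N₀ : V → ℝ) (A B : Set V) : ℝ :=
  sInf {δ : ℝ | 0 ≤ δ ∧ (∀ a ∈ A, ∃ b ∈ B, N₀ (a - b) ≤ δ) ∧
    ∀ b ∈ B, ∃ a ∈ A, N₀ (a - b) ≤ δ}

/-- The dual norm on `X*` of a norm (given as a function) `P` on `X`. -/
noncomputable def dualNormOf {X : Type} [AddCommGroup X] [Module ℝ X]
    (P : X → ℝ) (f : Module.Dual ℝ X) : ℝ :=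
  sSup {r : ℝ | ∃ x, P x ≤ 1 ∧ r = |f x|}

/-- `α_X(P,Q)`: the Hausdorff distance, with respect to the dual norm `N*` of the norm of
`X`, between the unit balls of the dual norms `P*` and `Q*` on `X*`. -/
noncomputable def alphaDist (X : Type) [NormedAddCommGroup X] [NormedSpace ℝ X]
    (P Q : X → ℝ) : ℝ :=
  hausdorffWrt (dualNormOf (fun x : X => ‖x‖))
    {f : Module.Dual ℝ X | dualNormOf P f ≤ 1}
    {f : Module.Dual ℝ X | dualNormOf Q f ≤ 1}

/-- `∂_{X,𝔾}(P,Q)`: the infimum of `‖T − U‖` over pairs of injective linear maps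
`T, U : X → 𝔾` inducing the norms `P` and `Q` respectively. -/
noncomputable def partialDist (𝔾 : Type) [NormedAddCommGroup 𝔾] [NormedSpace ℝ 𝔾]
    (X : Type) [NormedAddCommGroup X] [NormedSpace ℝ X] [FiniteDimensional ℝ X]
    (P Q : X → ℝ) : ℝ :=
  sInf {c : ℝ | ∃ T U : X →ₗ[ℝ] 𝔾,
    Function.Injective ⇑T ∧ Function.Injective ⇑U ∧
    (∀ x, ‖T x‖ = P x) ∧ (∀ x, ‖U x‖ = Q x) ∧
    c = ‖LinearMap.toContinuousLinearMap (T - U)‖}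

/-!
Lower bound: if `T` and `U` embed `(X, P)` and `(X, Q)` into `𝔾`, every functional `a` in the
dual ball of `P` is `g ∘ T` for a functional `g` of norm `≤ 1` on `𝔾` (Hahn–Banach), and `g ∘ U`
lies in the dual ball of `Q` within `‖T - U‖` of `a`.

Upper bound: if the two dual balls are `δ`-close and `δ < η`, the pairs of `η`-close functionals
from the two balls form the dual ball of a norm on `X × X` which restricts to `P` and `Q` on the
factors and gives `(x, -x)` norm at most `η ‖x‖`. Embedding `X × X` with this norm into `𝔾` by
universality gives `T, U` with `‖T - U‖ ≤ η`. The slack `δ < η` is what makes the norm definite: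
it leaves room for the pairs `(t • a, 0)` with `t > 0` small.
-/

namespace IsNormOn

variable {V : Type} [AddCommGroup V] [Module ℝ V] {N : V → ℝ}

theorem nonneg (hN : IsNormOn N) (x : V) : 0 ≤ N x := hN.1 x

theorem eq_zero_of_eq_zero (hN : IsNormOn N) {x : V} (hx : N x = 0) : x = 0 := hN.2.1 x hx

theorem map_smul (hN : IsNormOn N) (a : ℝ) (x : V) : N (a • x) = |a| * N x := hN.2.2.1 a x

theorem add_le (hN : IsNormOn N) (x y : V) : N (x + y) ≤ N x + N y := hN.2.2.2 x y

theorem map_zero (hN : IsNormOn N) : N 0 = 0 := by simpa using hN.map_smul 0 0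

theorem map_neg (hN : IsNormOn N) (x : V) : N (-x) = N x := by simpa using hN.map_smul (-1) x

theorem exists_linearEquiv (hN : IsNormOn N) :
    ∃ (Z : Type) (_ : NormedAddCommGroup Z) (_ : NormedSpace ℝ Z) (e : V ≃ₗ[ℝ] Z),
      ∀ x, ‖e x‖ = N x := by
  let _ : NormedAddCommGroup V := AddGroupNorm.toNormedAddCommGroup
    { toFun := N, map_zero' := hN.map_zero, add_le' := hN.add_le, neg' := hN.map_neg,
      eq_zero_of_map_eq_zero' := fun _ => hN.eq_zero_of_eq_zero }
  let _ : NormedSpace ℝ V := ⟨fun a x => (hN.map_smul a x).le⟩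
  exact ⟨V, _, _, LinearEquiv.refl ℝ V, fun _ => rfl⟩

theorem exists_norm_le_mul [FiniteDimensional ℝ V] (hN : IsNormOn N)
    {W : Type*} [NormedAddCommGroup W] [NormedSpace ℝ W] (L : V →ₗ[ℝ] W) :
    ∃ C, 0 ≤ C ∧ ∀ x, ‖L x‖ ≤ C * N x := by
  obtain ⟨Z, _, _, e, he⟩ := hN.exists_linearEquiv
  have : FiniteDimensional ℝ Z := e.finiteDimensional
  let L' := LinearMap.toContinuousLinearMap (L ∘ₗ e.symm.toLinearMap)
  refine ⟨‖L'‖, norm_nonneg _, fun x => ?_⟩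
  simpa [L', he] using L'.le_opNorm (e x)

theorem exists_dual_eq (hN : IsNormOn N) (x : V) :
    ∃ f : Module.Dual ℝ V, (∀ z, |f z| ≤ N z) ∧ f x = N x := by
  obtain ⟨Z, _, _, e, he⟩ := hN.exists_linearEquiv
  obtain ⟨g, hg, hgx⟩ := exists_dual_vector'' ℝ (e x)
  refine ⟨g.toLinearMap ∘ₗ e.toLinearMap, fun z => ?_, by simpa [he] using hgx⟩
  simpa [he] using (g.le_opNorm (e z)).trans (mul_le_of_le_one_left (norm_nonneg _) hg)

theorem exists_linearMap_norm_eq {𝔾 : Type} [NormedAddCommGroup 𝔾] [NormedSpace ℝ 𝔾]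
    (huniv : ∀ (Z : Type) [NormedAddCommGroup Z] [NormedSpace ℝ Z]
      [FiniteDimensional ℝ Z], Nonempty (Z →ₗᵢ[ℝ] 𝔾))
    [FiniteDimensional ℝ V] (hN : IsNormOn N) :
    ∃ T : V →ₗ[ℝ] 𝔾, ∀ x, ‖T x‖ = N x := by
  obtain ⟨Z, _, _, e, he⟩ := hN.exists_linearEquiv
  have : FiniteDimensional ℝ Z := e.finiteDimensional
  obtain ⟨ι⟩ := huniv Z
  exact ⟨ι.toLinearMap ∘ₗ e.toLinearMap, fun x => by simp [he]⟩

theorem injective_of_norm_eq {G : Type*} [NormedAddCommGroup G] [Module ℝ G]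
    (hN : IsNormOn N) {T : V →ₗ[ℝ] G} (hT : ∀ x, ‖T x‖ = N x) : Function.Injective T :=
  (injective_iff_map_eq_zero T).2 fun x hx => hN.eq_zero_of_eq_zero (by rw [← hT, hx, norm_zero])

end IsNormOn

theorem isNormOn_norm (X : Type) [NormedAddCommGroup X] [NormedSpace ℝ X] :
    IsNormOn (fun x : X => ‖x‖) :=
  ⟨norm_nonneg, fun _ => norm_eq_zero.mp, fun a x => by simp only [norm_smul, Real.norm_eq_abs],
    norm_add_le⟩

theorem IsNormOn.exists_le_mul_norm {X : Type} [NormedAddCommGroup X] [NormedSpace ℝ X]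
    [FiniteDimensional ℝ X] {N : X → ℝ} (hN : IsNormOn N) :
    ∃ C, 0 ≤ C ∧ ∀ x, N x ≤ C * ‖x‖ := by
  obtain ⟨Z, _, _, e, he⟩ := hN.exists_linearEquiv
  obtain ⟨C, hC, h⟩ := (isNormOn_norm X).exists_norm_le_mul e.toLinearMap
  exact ⟨C, hC, fun x => he x ▸ h x⟩

theorem dualNormOf_le_iff {V : Type} [AddCommGroup V] [Module ℝ V] [FiniteDimensional ℝ V]
    {N : V → ℝ} (hN : IsNormOn N) {c : ℝ} (hc : 0 ≤ c) (f : Module.Dual ℝ V) :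
    dualNormOf N f ≤ c ↔ ∀ x, |f x| ≤ c * N x := by
  refine ⟨fun h x => ?_, fun h => Real.sSup_le ?_ hc⟩
  · obtain ⟨C, hC, hfC⟩ := hN.exists_norm_le_mul f
    have hbdd : BddAbove {r : ℝ | ∃ x, N x ≤ 1 ∧ r = |f x|} := by
      refine ⟨C, ?_⟩
      rintro _ ⟨z, hz, rfl⟩
      exact (hfC z).trans (mul_le_of_le_one_right hC hz)
    rcases (hN.nonneg x).eq_or_lt with hx | hx
    · simp [hN.eq_zero_of_eq_zero hx.symm, hN.map_zero]
    have hfy : |f ((N x)⁻¹ • x)| ≤ c := by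
      refine (le_csSup hbdd ⟨_, ?_, rfl⟩).trans h
      rw [hN.map_smul, abs_inv, abs_of_pos hx, inv_mul_cancel₀ hx.ne']
    rw [map_smul, smul_eq_mul, abs_mul, abs_inv, abs_of_pos hx, inv_mul_le_iff₀ hx] at hfy
    linarith
  · rintro _ ⟨x, hx, rfl⟩
    exact (h x).trans (mul_le_of_le_one_right hc hx)

theorem dualNormOf_le_one_iff {V : Type} [AddCommGroup V] [Module ℝ V] [FiniteDimensional ℝ V]
    {N : V → ℝ} (hN : IsNormOn N) (f : Module.Dual ℝ V) :
    dualNormOf N f ≤ 1 ↔ ∀ x, |f x| ≤ N x := by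
  simp only [dualNormOf_le_iff hN zero_le_one, one_mul]

theorem Module.Dual.exists_comp_eq_of_abs_le {V G : Type*} [AddCommGroup V] [Module ℝ V]
    [NormedAddCommGroup G] [NormedSpace ℝ G] {T : V →ₗ[ℝ] G} (hT : Function.Injective T)
    {a : Module.Dual ℝ V} (ha : ∀ x, |a x| ≤ ‖T x‖) :
    ∃ g : Module.Dual ℝ G, (∀ z, |g z| ≤ ‖z‖) ∧ ∀ x, g (T x) = a x := by
  let e := LinearEquiv.ofInjective T hT
  have he : ∀ z : LinearMap.range T, T (e.symm z) = z := fun z => by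
    simp [e]
  obtain ⟨g, hg, hgle⟩ := Module.Dual.exists_extension_of_le_seminorm_real _
    (a ∘ₗ e.symm.toLinearMap) (p := normSeminorm ℝ G)
    fun z => (le_abs_self _).trans ((ha _).trans_eq (congrArg norm (he z)))
  refine ⟨g, hgle, fun x => ?_⟩
  simpa [e] using hg (e x)

section DualBallApprox

variable {X : Type} [NormedAddCommGroup X] [NormedSpace ℝ X] {P Q : X → ℝ} {δ : ℝ}

/-- Half of the Hausdorff condition in `alphaDist`, with dual balls and dual norms unfolded. -/
def DualBallApprox (P Q : X → ℝ) (δ : ℝ) : Prop :=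
  ∀ a : Module.Dual ℝ X, (∀ x, |a x| ≤ P x) →
    ∃ b : Module.Dual ℝ X, (∀ x, |b x| ≤ Q x) ∧ ∀ x, |a x - b x| ≤ δ * ‖x‖

theorem DualBallApprox.mono (h : DualBallApprox P Q δ) {δ' : ℝ} (hδ : δ ≤ δ') :
    DualBallApprox P Q δ' := fun a ha =>
  let ⟨b, hb, hab⟩ := h a ha
  ⟨b, hb, fun x => (hab x).trans (mul_le_mul_of_nonneg_right hδ (norm_nonneg x))⟩

theorem dualBallApprox_of_le_mul_norm {C : ℝ} (hC : ∀ x, P x ≤ C * ‖x‖) (hQ : ∀ x, 0 ≤ Q x) :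
    DualBallApprox P Q C := fun a ha =>
  ⟨0, fun x => by simpa using hQ x, fun x => by simpa using (ha x).trans (hC x)⟩

theorem dualBallApprox_of_norm_sub_le {G : Type*} [NormedAddCommGroup G] [NormedSpace ℝ G]
    {T U : X →ₗ[ℝ] G} (hT : ∀ x, ‖T x‖ = P x) (hU : ∀ x, ‖U x‖ = Q x)
    (hTinj : Function.Injective T) (hTU : ∀ x, ‖T x - U x‖ ≤ δ * ‖x‖) :
    DualBallApprox P Q δ := by
  intro a ha
  obtain ⟨g, hg, hgT⟩ := Module.Dual.exists_comp_eq_of_abs_le hTinj (a := a)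
    fun x => (ha x).trans_eq (hT x).symm
  refine ⟨g ∘ₗ U, fun y => (hg (U y)).trans_eq (hU y), fun x => ?_⟩
  calc |a x - g (U x)| = |g (T x - U x)| := by rw [map_sub, hgT]
    _ ≤ ‖T x - U x‖ := hg _
    _ ≤ δ * ‖x‖ := hTU x

theorem alphaDist_eq_sInf [FiniteDimensional ℝ X] (hP : IsNormOn P) (hQ : IsNormOn Q) :
    alphaDist X P Q = sInf {δ | 0 ≤ δ ∧ DualBallApprox P Q δ ∧ DualBallApprox Q P δ} := by
  unfold alphaDist hausdorffWrt
  congr 1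
  ext δ
  refine and_congr_right fun hδ => ?_
  simp only [Set.mem_ofPred_eq, dualNormOf_le_one_iff hP, dualNormOf_le_one_iff hQ,
    dualNormOf_le_iff (isNormOn_norm X) hδ, LinearMap.sub_apply, DualBallApprox]
  exact and_congr_right' <| forall₂_congr fun b _ => exists_congr fun a =>
    and_congr_right' <| forall_congr' fun x => by rw [abs_sub_comm]

theorem alphaDist_le [FiniteDimensional ℝ X] (hP : IsNormOn P) (hQ : IsNormOn Q) (hδ : 0 ≤ δ)
    (hPQ : DualBallApprox P Q δ) (hQP : DualBallApprox Q P δ) : alphaDist X P Q ≤ δ := by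
  rw [alphaDist_eq_sInf hP hQ]
  exact csInf_le ⟨0, fun _ h => h.1⟩ ⟨hδ, hPQ, hQP⟩

theorem le_alphaDist [FiniteDimensional ℝ X] (hP : IsNormOn P) (hQ : IsNormOn Q) {c : ℝ}
    (h : ∀ δ, 0 ≤ δ → DualBallApprox P Q δ → DualBallApprox Q P δ → c ≤ δ) :
    c ≤ alphaDist X P Q := by
  obtain ⟨CP, hCP, hPC⟩ := hP.exists_le_mul_norm
  obtain ⟨CQ, -, hQC⟩ := hQ.exists_le_mul_norm
  rw [alphaDist_eq_sInf hP hQ]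
  refine le_csInf ⟨max CP CQ, le_max_of_le_left hCP,
    (dualBallApprox_of_le_mul_norm hPC hQ.nonneg).mono (le_max_left _ _),
    (dualBallApprox_of_le_mul_norm hQC hP.nonneg).mono (le_max_right _ _)⟩ ?_
  rintro δ ⟨hδ, hPQ, hQP⟩
  exact h δ hδ hPQ hQP

end DualBallApprox

theorem isNormOn_iSup_abs {V : Type} [AddCommGroup V] [Module ℝ V] {ι : Type*}
    (f : ι → Module.Dual ℝ V) (hbdd : ∀ v, BddAbove (Set.range fun i => |f i v|))
    (hsep : ∀ v, (∀ i, f i v = 0) → v = 0) :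
    IsNormOn fun v => ⨆ i, |f i v| := by
  have hnonneg : ∀ v, 0 ≤ ⨆ i, |f i v| := fun v => Real.iSup_nonneg fun i => abs_nonneg _
  refine ⟨hnonneg, fun v hv => hsep v fun i => ?_, fun a v => ?_, fun v w => ?_⟩
  · exact abs_nonpos_iff.mp ((le_ciSup (hbdd v) i).trans hv.le)
  · simp only [map_smul, smul_eq_mul, abs_mul, Real.mul_iSup_of_nonneg (abs_nonneg a)]
  · refine Real.iSup_le (fun i => ?_) (add_nonneg (hnonneg v) (hnonneg w))
    rw [map_add]
    exact (abs_add_le _ _).trans (add_le_add (le_ciSup (hbdd v) i) (le_ciSup (hbdd w) i))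

section Amalgam

variable {X : Type} [NormedAddCommGroup X] [NormedSpace ℝ X] {P Q : X → ℝ} {δ η : ℝ}

def closePairs (P Q : X → ℝ) (η : ℝ) : Set (Module.Dual ℝ X × Module.Dual ℝ X) :=
  {p | (∀ x, |p.1 x| ≤ P x) ∧ (∀ x, |p.2 x| ≤ Q x) ∧ ∀ x, |p.1 x - p.2 x| ≤ η * ‖x‖}

theorem swap_mem_closePairs {p : Module.Dual ℝ X × Module.Dual ℝ X} :
    p.swap ∈ closePairs Q P η ↔ p ∈ closePairs P Q η := by
  constructor <;> rintro ⟨h₁, h₂, h₁₂⟩ <;>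
    exact ⟨h₂, h₁, fun x => abs_sub_comm (p.1 x) (p.2 x) ▸ h₁₂ x⟩

theorem abs_add_le_of_mem_closePairs {p : Module.Dual ℝ X × Module.Dual ℝ X}
    (hp : p ∈ closePairs P Q η) (x y : X) : |p.1 x + p.2 y| ≤ P x + Q y :=
  (abs_add_le _ _).trans (add_le_add (hp.1 x) (hp.2.1 y))

theorem exists_pos_smul_fst_mem_closePairs [FiniteDimensional ℝ X] (hP : IsNormOn P)
    (hQ : ∀ x, 0 ≤ Q x) (hη : 0 < η) {a : Module.Dual ℝ X} (ha : ∀ x, |a x| ≤ P x) :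
    ∃ t : ℝ, 0 < t ∧ (t • a, 0) ∈ closePairs P Q η := by
  obtain ⟨C, hC, hPC⟩ := hP.exists_le_mul_norm
  set t := η / (η + C)
  have ht : 0 < t := by positivity
  have ht1 : t ≤ 1 := div_le_one_of_le₀ (by linarith) (by positivity)
  have htC : t * C ≤ η := by
    rw [div_mul_eq_mul_div, div_le_iff₀ (by positivity)]
    nlinarith
  have hta : ∀ x, |(t • a) x| ≤ t * P x := fun x => by
    rw [LinearMap.smul_apply, smul_eq_mul, abs_mul, abs_of_pos ht]
    exact mul_le_mul_of_nonneg_left (ha x) ht.le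
  refine ⟨t, ht, fun x => (hta x).trans (mul_le_of_le_one_left (hP.nonneg x) ht1),
    fun x => by simpa using hQ x, fun x => ?_⟩
  calc |(t • a) x - (0 : Module.Dual ℝ X) x| ≤ t * P x := by simpa using hta x
    _ ≤ t * (C * ‖x‖) := mul_le_mul_of_nonneg_left (hPC x) ht.le
    _ ≤ η * ‖x‖ := by
        rw [← mul_assoc]
        exact mul_le_mul_of_nonneg_right htC (norm_nonneg x)

theorem eq_zero_of_forall_mem_closePairs [FiniteDimensional ℝ X] (hP : IsNormOn P)
    (hQ : ∀ x, 0 ≤ Q x) (hη : 0 < η) {x y : X}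
    (h : ∀ p ∈ closePairs P Q η, p.1 x + p.2 y = 0) : x = 0 := by
  obtain ⟨a, ha, hax⟩ := hP.exists_dual_eq x
  obtain ⟨t, ht, hmem⟩ := exists_pos_smul_fst_mem_closePairs hP hQ hη ha
  have htx := h _ hmem
  simp only [LinearMap.smul_apply, smul_eq_mul, hax, LinearMap.zero_apply, add_zero,
    mul_eq_zero, ht.ne', false_or] at htx
  exact hP.eq_zero_of_eq_zero htx

/-- The norm on `X × X` whose dual unit ball is `closePairs P Q η`, for the pairing
`(a, b) (x, y) = a x + b y`. -/
noncomputable def amalgamNorm (P Q : X → ℝ) (η : ℝ) (v : X × X) : ℝ :=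
  ⨆ p : closePairs P Q η, |p.1.1 v.1 + p.1.2 v.2|

theorem bddAbove_range_closePairs (v : X × X) :
    BddAbove (Set.range fun p : closePairs P Q η => |p.1.1 v.1 + p.1.2 v.2|) :=
  ⟨P v.1 + Q v.2, by rintro _ ⟨p, rfl⟩; exact abs_add_le_of_mem_closePairs p.2 v.1 v.2⟩

theorem amalgamNorm_swap (v : X × X) : amalgamNorm Q P η v.swap = amalgamNorm P Q η v := by
  unfold amalgamNorm
  rw [← (Equiv.subtypeEquiv (Equiv.prodComm _ _) fun p => swap_mem_closePairs.symm).iSup_comp]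
  refine iSup_congr fun p => ?_
  change |p.1.2 v.2 + p.1.1 v.1| = |p.1.1 v.1 + p.1.2 v.2|
  rw [add_comm]

theorem isNormOn_amalgamNorm [FiniteDimensional ℝ X] (hP : IsNormOn P) (hQ : IsNormOn Q)
    (hη : 0 < η) : IsNormOn (amalgamNorm P Q η) := by
  refine isNormOn_iSup_abs (fun p : closePairs P Q η => p.1.1.coprod p.1.2)
    bddAbove_range_closePairs fun v hv => ?_
  have h : ∀ p ∈ closePairs P Q η, p.1 v.1 + p.2 v.2 = 0 := fun p hp => hv ⟨p, hp⟩
  refine Prod.ext (eq_zero_of_forall_mem_closePairs hP hQ.nonneg hη h)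
    (eq_zero_of_forall_mem_closePairs hQ hP.nonneg hη (y := v.1) fun p hp => ?_)
  rw [add_comm]
  exact h p.swap (swap_mem_closePairs.mpr hp)

theorem amalgamNorm_inl (hP : IsNormOn P) (hPQ : DualBallApprox P Q δ) (hδη : δ ≤ η) (x : X) :
    amalgamNorm P Q η (x, 0) = P x := by
  refine le_antisymm (Real.iSup_le (fun p => by simpa using p.2.1 x) (hP.nonneg x)) ?_
  obtain ⟨a, ha, hax⟩ := hP.exists_dual_eq x
  obtain ⟨b, hb, hab⟩ := hPQ.mono hδη a ha
  refine le_ciSup_of_le (bddAbove_range_closePairs (x, 0)) ⟨(a, b), ha, hb, hab⟩ ?_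
  simp [hax, abs_of_nonneg (hP.nonneg x)]

theorem amalgamNorm_inr (hQ : IsNormOn Q) (hQP : DualBallApprox Q P δ) (hδη : δ ≤ η) (y : X) :
    amalgamNorm P Q η (0, y) = Q y :=
  (amalgamNorm_swap (P := Q) (Q := P) (y, 0)).trans (amalgamNorm_inl hQ hQP hδη y)

theorem amalgamNorm_neg_diag_le (hη : 0 ≤ η) (x : X) :
    amalgamNorm P Q η (x, -x) ≤ η * ‖x‖ :=
  Real.iSup_le (fun p => by simpa [← sub_eq_add_neg] using p.2.2.2 x)
    (mul_nonneg hη (norm_nonneg x))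

theorem exists_linearMap_norm_sub_le {𝔾 : Type} [NormedAddCommGroup 𝔾] [NormedSpace ℝ 𝔾]
    (huniv : ∀ (Z : Type) [NormedAddCommGroup Z] [NormedSpace ℝ Z]
      [FiniteDimensional ℝ Z], Nonempty (Z →ₗᵢ[ℝ] 𝔾))
    [FiniteDimensional ℝ X] (hP : IsNormOn P) (hQ : IsNormOn Q) (hδ : 0 ≤ δ)
    (hPQ : DualBallApprox P Q δ) (hQP : DualBallApprox Q P δ) (hδη : δ < η) :
    ∃ T U : X →ₗ[ℝ] 𝔾, (∀ x, ‖T x‖ = P x) ∧ (∀ x, ‖U x‖ = Q x) ∧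
      ∀ x, ‖T x - U x‖ ≤ η * ‖x‖ := by
  have hη : 0 < η := hδ.trans_lt hδη
  obtain ⟨W, hW⟩ := (isNormOn_amalgamNorm hP hQ hη).exists_linearMap_norm_eq huniv
  refine ⟨W ∘ₗ LinearMap.inl ℝ X X, W ∘ₗ LinearMap.inr ℝ X X, fun x => ?_, fun y => ?_,
    fun x => ?_⟩
  · simpa [hW] using amalgamNorm_inl hP hPQ hδη.le x
  · simpa [hW] using amalgamNorm_inr hQ hQP hδη.le y
  · have hdiag : W (x, 0) - W (0, x) = W (x, -x) := by rw [← map_sub]; simp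
    simpa [hW, hdiag] using amalgamNorm_neg_diag_le hη.le x

end Amalgam

section PartialDist

variable {𝔾 : Type} [NormedAddCommGroup 𝔾] [NormedSpace ℝ 𝔾]
  {X : Type} [NormedAddCommGroup X] [NormedSpace ℝ X] [FiniteDimensional ℝ X] {P Q : X → ℝ}

theorem partialDist_le (hP : IsNormOn P) (hQ : IsNormOn Q) {T U : X →ₗ[ℝ] 𝔾}
    (hT : ∀ x, ‖T x‖ = P x) (hU : ∀ x, ‖U x‖ = Q x) {c : ℝ} (hc : 0 ≤ c)
    (hTU : ∀ x, ‖T x - U x‖ ≤ c * ‖x‖) : partialDist 𝔾 X P Q ≤ c := by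
  calc partialDist 𝔾 X P Q ≤ ‖LinearMap.toContinuousLinearMap (T - U)‖ := csInf_le ⟨0, ?_⟩
        ⟨T, U, hP.injective_of_norm_eq hT, hQ.injective_of_norm_eq hU, hT, hU, rfl⟩
    _ ≤ c := ContinuousLinearMap.opNorm_le_bound _ hc fun x => by simpa using hTU x
  rintro _ ⟨T, U, -, -, -, -, rfl⟩
  exact norm_nonneg _

theorem le_partialDist
    (huniv : ∀ (Z : Type) [NormedAddCommGroup Z] [NormedSpace ℝ Z]
      [FiniteDimensional ℝ Z], Nonempty (Z →ₗᵢ[ℝ] 𝔾))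
    (hP : IsNormOn P) (hQ : IsNormOn Q) {c : ℝ}
    (h : ∀ T U : X →ₗ[ℝ] 𝔾, (∀ x, ‖T x‖ = P x) → (∀ x, ‖U x‖ = Q x) →
      c ≤ ‖LinearMap.toContinuousLinearMap (T - U)‖) :
    c ≤ partialDist 𝔾 X P Q := by
  obtain ⟨T, hT⟩ := hP.exists_linearMap_norm_eq huniv
  obtain ⟨U, hU⟩ := hQ.exists_linearMap_norm_eq huniv
  refine le_csInf ⟨_, T, U, hP.injective_of_norm_eq hT, hQ.injective_of_norm_eq hU, hT, hU, rfl⟩ ?_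
  rintro _ ⟨T, U, -, -, hT, hU, rfl⟩
  exact h T U hT hU

end PartialDist

theorem partialDist_eq_alphaDist_general
    (𝔾 : Type) [NormedAddCommGroup 𝔾] [NormedSpace ℝ 𝔾]
    (huniv : ∀ (Z : Type) [NormedAddCommGroup Z] [NormedSpace ℝ Z]
      [FiniteDimensional ℝ Z], Nonempty (Z →ₗᵢ[ℝ] 𝔾))
    (X : Type) [NormedAddCommGroup X] [NormedSpace ℝ X] [FiniteDimensional ℝ X]
    (P Q : X → ℝ) (hP : IsNormOn P) (hQ : IsNormOn Q) :
    partialDist 𝔾 X P Q = alphaDist X P Q := by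
  refine le_antisymm (le_alphaDist hP hQ fun δ hδ hPQ hQP => ?_)
    (le_partialDist huniv hP hQ fun T U hT hU => ?_)
  · refine le_of_forall_pos_le_add fun ε hε => ?_
    obtain ⟨T, U, hT, hU, hTU⟩ :=
      exists_linearMap_norm_sub_le huniv hP hQ hδ hPQ hQP (lt_add_of_pos_right δ hε)
    exact partialDist_le hP hQ hT hU (by positivity) hTU
  · have hTU : ∀ x, ‖T x - U x‖ ≤ ‖LinearMap.toContinuousLinearMap (T - U)‖ * ‖x‖ := fun x => by
      simpa using (LinearMap.toContinuousLinearMap (T - U)).le_opNorm x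
    exact alphaDist_le hP hQ (norm_nonneg _)
      (dualBallApprox_of_norm_sub_le hT hU (hP.injective_of_norm_eq hT) hTU)
      (dualBallApprox_of_norm_sub_le hU hT (hQ.injective_of_norm_eq hU) fun x => by
        rw [norm_sub_rev]; exact hTU x)

/-- For the Gurarij space `𝔾` (axiomatized as a separable Banach space which is universal
for finite-dimensional spaces and approximately ultrahomogeneous), for every
finite-dimensional normed space `X` and all norms `P, Q` on `X`:
`∂_{X,𝔾}(P,Q) = α_X(P,Q)`. -/
theorem partialDist_eq_alphaDist
    (𝔾 : Type) [NormedAddCommGroup 𝔾] [NormedSpace ℝ 𝔾] [CompleteSpace 𝔾]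
    [TopologicalSpace.SeparableSpace 𝔾]
    (huniv : ∀ (Z : Type) [NormedAddCommGroup Z] [NormedSpace ℝ Z]
      [FiniteDimensional ℝ Z], Nonempty (Z →ₗᵢ[ℝ] 𝔾))
    (hhomog : ∀ (Z : Type) [NormedAddCommGroup Z] [NormedSpace ℝ Z]
      [FiniteDimensional ℝ Z] (f g : Z →ₗᵢ[ℝ] 𝔾) (ε : ℝ), 0 < ε →
        ∃ h : 𝔾 ≃ₗᵢ[ℝ] 𝔾, ∀ z : Z, ‖h (f z) - g z‖ ≤ ε * ‖z‖)
    (X : Type) [NormedAddCommGroup X] [NormedSpace ℝ X] [FiniteDimensional ℝ X]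
    (P Q : X → ℝ) (hP : IsNormOn P) (hQ : IsNormOn Q) :
    partialDist 𝔾 X P Q = alphaDist X P Q :=
  partialDist_eq_alphaDist_general 𝔾 huniv X P Q hP hQ
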